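/- Let d ≥ 1 and let ν be a probability measure on [0,∞)^{E^d} (with the product σ-algebra), invariant under all translations of ℤ^d, which has unique passage times in the weak sense that ν(t_e = t_f) = 0 for every pair of distinct edges e ≠ f in E^d. Then the marginal distribution of every edge weight is continuous: for every edge e ∈ E^d and every a ∈ [0,∞), ν(t_e = a) = 0. -/

import Mathlib

/-!
Translating an edge `{x, y}` repeatedly by its own direction `y - x` produces infinitely many
distinct edges. By translation invariance each of them carries the atom `{t_e = a}` with the same
mass, and by unique passage times these events are pairwise almost disjoint. Infinitely many almost
disjoint events of equal mass fit into a probability space only if that mass is zero.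
-/

open MeasureTheory
open scoped NNReal

/-- Vertices of the `d`-dimensional lattice. -/
abbrev Vtx (d : ℕ) := Fin d → ℤ

/-- ℓ¹-distance on `ℤ^d`. -/
def dist1 {d : ℕ} (x y : Vtx d) : ℤ := ∑ i, |x i - y i|

/-- A nonnegative weight configuration on the (unordered) nearest-neighbor edges
of `ℤ^d` (values at non-edges are irrelevant). -/
abbrev WConfig (d : ℕ) := Sym2 (Vtx d) → ℝ≥0

/-- Translation of a weight configuration by `z`. -/
def shiftW {d : ℕ} (z : Vtx d) (t : WConfig d) : WConfig d :=
  fun e => t (e.map (· + z))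

theorem measure_eq_zero_of_pairwise_aedisjoint {α ι : Type*} [MeasurableSpace α]
    [Countable ι] [Infinite ι] {μ : Measure α} [IsFiniteMeasure μ] {A : ι → Set α} {c : ENNReal}
    (hA : ∀ i, NullMeasurableSet (A i) μ) (hdisj : Pairwise (Function.onFun (AEDisjoint μ) A))
    (hc : ∀ i, μ (A i) = c) : c = 0 := by
  by_contra hc0
  have hsum : ∑' i, μ (A i) = ⊤ := by
    simpa only [hc] using ENNReal.tsum_const_eq_top_of_ne_zero hc0
  have hle := tsum_measure_le_measure_univ hA hdisj
  rw [hsum, top_le_iff] at hle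
  exact measure_ne_top μ _ hle

theorem Sym2.injective_mk_add_zsmul_sub {G : Type*} [AddCommGroup G] [IsAddTorsionFree G]
    {x y : G} (hxy : x ≠ y) :
    Function.Injective fun n : ℤ => s(x + n • (y - x), y + n • (y - x)) := by
  have hz : y - x ≠ 0 := sub_ne_zero.mpr hxy.symm
  have hinj := smul_left_injective ℤ hz
  intro m n h
  rcases Sym2.eq_iff.mp h with ⟨h₁, -⟩ | ⟨h₁, h₂⟩
  · exact hinj (add_left_cancel h₁)
  · have hpos : m - n = 1 := hinj (by linear_combination (norm := module) h₁)
    have hneg : m - n = -1 := hinj (by linear_combination (norm := module) h₂)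
    omega

section Lattice

variable {d : ℕ}

theorem dist1_add_right (x y z : Vtx d) : dist1 (x + z) (y + z) = dist1 x y := by
  simp [dist1]

theorem ne_of_dist1_eq_one {x y : Vtx d} (h : dist1 x y = 1) : x ≠ y := by
  rintro rfl
  simp [dist1] at h

theorem measure_weight_add_eq {ν : Measure (WConfig d)}
    (hinv : ∀ z : Vtx d, MeasurePreserving (shiftW z) ν ν) (x y z : Vtx d) (a : ℝ≥0) :
    ν {t : WConfig d | t s(x + z, y + z) = a} = ν {t : WConfig d | t s(x, y) = a} :=
  (hinv z).measure_preimage (s := {t : WConfig d | t s(x, y) = a})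
    (measurableSet_eq_fun (measurable_pi_apply _) measurable_const).nullMeasurableSet

end Lattice

theorem stmt12_general (d : ℕ)
    (ν : Measure (WConfig d)) [IsProbabilityMeasure ν]
    (hinv : ∀ z : Vtx d, MeasurePreserving (shiftW z) ν ν)
    (huniq : ∀ x y u v : Vtx d, dist1 x y = 1 → dist1 u v = 1 → s(x, y) ≠ s(u, v) →
      ν {t : WConfig d | t s(x, y) = t s(u, v)} = 0) :
    ∀ x y : Vtx d, dist1 x y = 1 → ∀ a : ℝ≥0, ν {t : WConfig d | t s(x, y) = a} = 0 := by
  intro x y hxy a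
  set z := y - x
  have hinj := Sym2.injective_mk_add_zsmul_sub (ne_of_dist1_eq_one hxy)
  refine measure_eq_zero_of_pairwise_aedisjoint
    (A := fun n : ℤ => {t : WConfig d | t s(x + n • z, y + n • z) = a})
    (fun n => (measurableSet_eq_fun (measurable_pi_apply _) measurable_const).nullMeasurableSet)
    (fun m n hmn => ?_) (fun n => measure_weight_add_eq hinv x y _ a)
  refine measure_mono_null (fun t ht => ht.1.trans ht.2.symm) ?_
  exact huniq _ _ _ _ (by rwa [dist1_add_right]) (by rwa [dist1_add_right]) (hinj.ne hmn)

/-- a translation-invariant probability measure on edge-weight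
configurations with weakly unique passage times (`ν(t_e = t_f) = 0` for distinct edges
`e ≠ f`) has continuous marginals: `ν(t_e = a) = 0` for every edge `e` and `a ≥ 0`. -/
theorem stmt12 (d : ℕ) (hd : 1 ≤ d)
    (ν : Measure (WConfig d)) [IsProbabilityMeasure ν]
    (hinv : ∀ z : Vtx d, MeasurePreserving (shiftW z) ν ν)
    (huniq : ∀ x y u v : Vtx d, dist1 x y = 1 → dist1 u v = 1 → s(x, y) ≠ s(u, v) →
      ν {t : WConfig d | t s(x, y) = t s(u, v)} = 0) :
    ∀ x y : Vtx d, dist1 x y = 1 → ∀ a : ℝ≥0, ν {t : WConfig d | t s(x, y) = a} = 0 :=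
  stmt12_general d ν hinv huniq
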